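/- Under periodic boundary conditions of period τ and ρ(P_i) < 1, the subsequence x_i(nτ) sampled at multiples of the period converges as n → ∞ to (I - P_i^τ)^{-1} Σ_{m=0}^{τ-1} P_i^m P_e x_b(τ - 1 - m), and this limit is independent of x_i(0). -/

import Mathlib

/-! Over one period the forcing repeats, so the sampled states `y n = x (n * τ)` satisfy the
autonomous affine recurrence `y (n + 1) = P_i ^ τ * y n + c`, with `c` the stated sum. Gelfand's
formula turns `ρ(P_i) < 1` into `P_i ^ n → 0`. Hence `1 - P_i ^ τ` is invertible (a fixed vector
of `P_i ^ τ` is fixed by all its powers, so it vanishes), and for the fixed point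
`L = (1 - P_i ^ τ)⁻¹ c` we get `y n - L = (P_i ^ τ) ^ n (y 0 - L) → 0`. -/

open Matrix Filter Topology

theorem tendsto_pow_atTop_nhds_zero_of_spectralRadius_lt_one {A : Type*} [NormedRing A]
    [NormedAlgebra ℂ A] [CompleteSpace A] {a : A} (h : spectralRadius ℂ a < 1) :
    Tendsto (a ^ ·) atTop (𝓝 0) := by
  obtain ⟨r, hr, hr1⟩ := ENNReal.lt_iff_exists_nnreal_btwn.mp h
  -- Gelfand: `‖a ^ n‖ ^ (1 / n) → ρ(a) < r`.
  have hbound : ∀ᶠ n : ℕ in atTop, ‖a ^ n‖ ≤ (r : ℝ) ^ n := by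
    filter_upwards
      [(spectrum.pow_nnnorm_pow_one_div_tendsto_nhds_spectralRadius a).eventually_lt_const hr,
      eventually_ne_atTop 0] with n hn hn0
    have h2 : ((‖a ^ n‖₊ : ENNReal) ^ (1 / (n : ℝ))) ^ (n : ℝ) ≤ (r : ENNReal) ^ (n : ℝ) :=
      ENNReal.rpow_le_rpow hn.le (by positivity)
    rw [← ENNReal.rpow_mul, one_div, inv_mul_cancel₀ (by exact_mod_cast hn0), ENNReal.rpow_one,
      ENNReal.rpow_natCast, ← ENNReal.coe_pow, ENNReal.coe_le_coe] at h2
    exact_mod_cast h2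
  exact squeeze_zero_norm' hbound
    (tendsto_pow_atTop_nhds_zero_of_lt_one r.coe_nonneg (by exact_mod_cast hr1))

theorem spectralRadius_lt_one_of_forall_norm_lt_one {A : Type*} [NormedRing A]
    [NormedAlgebra ℂ A] [CompleteSpace A] {a : A} (h : ∀ μ ∈ spectrum ℂ a, ‖μ‖ < 1) :
    spectralRadius ℂ a < 1 := by
  rcases (spectrum ℂ a).eq_empty_or_nonempty with hempty | hne
  · simp [spectralRadius, hempty]
  · simpa using spectrum.spectralRadius_lt_of_forall_lt_of_nonempty hne (r := 1)
      fun μ hμ => by simpa [← NNReal.coe_lt_coe] using h μ hμ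

namespace Matrix

variable {n : Type*} [Fintype n] [DecidableEq n]

theorem tendsto_pow_atTop_nhds_zero_of_forall_spectrum_norm_lt_one {A : Matrix n n ℂ}
    (h : ∀ μ ∈ spectrum ℂ A, ‖μ‖ < 1) : Tendsto (A ^ ·) atTop (𝓝 0) := by
  let _ := Matrix.linftyOpNormedRing (n := n) (α := ℂ)
  let _ := Matrix.linftyOpNormedAlgebra (n := n) (R := ℂ) (α := ℂ)
  exact tendsto_pow_atTop_nhds_zero_of_spectralRadius_lt_one
    (spectralRadius_lt_one_of_forall_norm_lt_one h)

theorem tendsto_pow_atTop_nhds_zero_of_forall_spectrum_map_norm_lt_one {A : Matrix n n ℝ}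
    (h : ∀ μ ∈ spectrum ℂ (A.map (algebraMap ℝ ℂ)), ‖μ‖ < 1) : Tendsto (A ^ ·) atTop (𝓝 0) := by
  have hC := tendsto_pow_atTop_nhds_zero_of_forall_spectrum_norm_lt_one h
  have hre := ((continuous_id.matrix_map Complex.continuous_re).tendsto 0).comp hC
  simp only [← Matrix.map_pow] at hre
  simpa [Function.comp_def] using hre

theorem eq_pow_mulVec_add_sum_of_recurrence {R : Type*} [Semiring R] {P : Matrix n n R}
    {u x : ℕ → n → R} (hx : ∀ k, x (k + 1) = P *ᵥ x k + u k) (m : ℕ) :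
    x m = P ^ m *ᵥ x 0 + ∑ j ∈ Finset.range m, P ^ j *ᵥ u (m - 1 - j) := by
  induction m with
  | zero => simp
  | succ m ih =>
    rw [hx, ih, Finset.sum_range_succ', mulVec_add, mulVec_mulVec, mulVec_sum, pow_succ']
    simp only [mulVec_mulVec, ← pow_succ', pow_zero, one_mulVec, Nat.add_sub_cancel, Nat.sub_zero,
      Nat.sub_sub, Nat.add_comm 1]
    abel

theorem isUnit_det_one_sub_of_tendsto_pow_nhds_zero {K : Type*} [Field K] [TopologicalSpace K]
    [IsTopologicalRing K] [T2Space K] {B : Matrix n n K} (hB : Tendsto (B ^ ·) atTop (𝓝 0)) :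
    IsUnit (1 - B).det := by
  refine isUnit_iff_ne_zero.mpr fun hdet => ?_
  obtain ⟨v, hv, hfixed⟩ := exists_mulVec_eq_zero_iff.mpr hdet
  rw [sub_mulVec, one_mulVec, sub_eq_zero] at hfixed
  have hpow : ∀ k : ℕ, B ^ k *ᵥ v = v := fun k => by
    induction k with
    | zero => simp
    | succ k ih => rw [pow_succ, ← mulVec_mulVec, ← hfixed, ih]
  have hlim : Tendsto (fun k : ℕ => B ^ k *ᵥ v) atTop (𝓝 (0 *ᵥ v)) :=
    ((continuous_id.matrix_mulVec continuous_const).tendsto 0).comp hB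
  simp only [hpow, zero_mulVec, tendsto_const_nhds_iff] at hlim
  exact hv hlim

theorem tendsto_of_affine_recurrence {R : Type*} [CommRing R] [TopologicalSpace R]
    [IsTopologicalRing R] {B : Matrix n n R} {c : n → R} {y : ℕ → n → R}
    (hB : Tendsto (B ^ ·) atTop (𝓝 0)) (hdet : IsUnit (1 - B).det)
    (hy : ∀ k, y (k + 1) = B *ᵥ y k + c) :
    Tendsto y atTop (𝓝 ((1 - B)⁻¹ *ᵥ c)) := by
  set L := (1 - B)⁻¹ *ᵥ c
  have hfixed : B *ᵥ L + c = L := by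
    have : (1 - B) *ᵥ L = c := by rw [mulVec_mulVec, mul_nonsing_inv _ hdet, one_mulVec]
    rw [← this, sub_mulVec, one_mulVec]
    abel
  have herror : ∀ k, y k = L + B ^ k *ᵥ (y 0 - L) := fun k => by
    induction k with
    | zero => simp
    | succ k ih =>
      rw [hy, ih, mulVec_add, add_right_comm, hfixed, pow_succ', mulVec_mulVec]
  have hlim : Tendsto (fun k : ℕ => L + B ^ k *ᵥ (y 0 - L)) atTop (𝓝 (L + 0 *ᵥ (y 0 - L))) :=
    tendsto_const_nhds.add (((continuous_id.matrix_mulVec continuous_const).tendsto 0).comp hB)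
  simpa only [← herror, zero_mulVec, add_zero] using hlim

end Matrix

/-- Under τ-periodic boundary conditions, the subsequence sampled at multiples
of the period converges to a limit independent of the initial internal state. -/
theorem stmt_10 {K M : ℕ} (Pe : Matrix (Fin M) (Fin K) ℝ)
    (Pi_ : Matrix (Fin M) (Fin M) ℝ)
    (hspec : ∀ μ ∈ spectrum ℂ (Pi_.map (algebraMap ℝ ℂ)), ‖μ‖ < 1)
    (τ : ℕ) (hτ : 1 ≤ τ) (xb : ℕ → Fin K → ℝ)
    (hper : ∀ t, xb (t + τ) = xb t)
    (x : ℕ → Fin M → ℝ)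
    (hdyn : ∀ k, x (k + 1) = Pe.mulVec (xb k) + Pi_.mulVec (x k)) :
    Filter.Tendsto (fun n => x (n * τ)) Filter.atTop
      (nhds ((1 - Pi_ ^ τ)⁻¹.mulVec
        (∑ m ∈ Finset.range τ, (Pi_ ^ m).mulVec (Pe.mulVec (xb (τ - 1 - m)))))) := by
  have hpow : Tendsto ((Pi_ ^ τ) ^ ·) atTop (𝓝 0) := by
    simpa only [← pow_mul, mul_comm τ, Function.comp_def, id] using
      (tendsto_pow_atTop_nhds_zero_of_forall_spectrum_map_norm_lt_one hspec).comp
        (tendsto_id.atTop_mul_const' hτ)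
  refine tendsto_of_affine_recurrence hpow (isUnit_det_one_sub_of_tendsto_pow_nhds_zero hpow)
    fun n => ?_
  have hperiodic : Function.Periodic xb (n * τ) := by
    simpa using (show Function.Periodic xb τ from hper).nat_mul n
  have hunroll := eq_pow_mulVec_add_sum_of_recurrence (P := Pi_) (x := fun k => x (n * τ + k))
    (u := fun k => Pe *ᵥ xb (n * τ + k)) (fun k => by rw [← add_assoc, hdyn, add_comm]) τ
  simp only [add_zero] at hunroll
  rw [add_one_mul, hunroll]
  congr 1
  refine Finset.sum_congr rfl fun j _ => ?_
  rw [add_comm, hperiodic]
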